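/- arXiv:1801.10554 — 4 statements merged into one kernel-verified Lean document; each statement's English description precedes it below -/
import Mathlib

section
/- For the q-quadratic lattice x(s) = c₁q^{-s} + c₂q^{s} + c₃ with q ≠ 1, and for every nonnegative integer n, (x(s+n) + x(s))/2 = αₙ x(s + n/2) + βₙ, where αₙ = (q^{n/2} + q^{-n/2})/2 and βₙ = β(1 - αₙ)/(1 - α) with α = (q^{1/2} + q^{-1/2})/2 and β = -c₃(√q - 1)²/(2√q). -/
/-- For the q-quadratic lattice, `(x(s+n) + x(s))/2 = αₙ x(s+n/2) + βₙ`. -/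
theorem stmt1 (q c₁ c₂ c₃ : ℝ) (hq : 0 < q) (hq1 : q ≠ 1) (hc₁ : c₁ ≠ 0)
    (x : ℝ → ℝ) (hx : ∀ s : ℝ, x s = c₁ * q ^ (-s) + c₂ * q ^ s + c₃)
    (α : ℕ → ℝ) (hα : ∀ n : ℕ, α n = (q ^ ((n : ℝ) / 2) + q ^ (-(n : ℝ) / 2)) / 2)
    (β : ℝ) (hβ : β = -c₃ * (Real.sqrt q - 1) ^ 2 / (2 * Real.sqrt q))
    (βn : ℕ → ℝ) (hβn : ∀ n : ℕ, βn n = β * (1 - α n) / (1 - α 1))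
    (n : ℕ) (s : ℝ) :
    (x (s + n) + x s) / 2 = α n * x (s + (n : ℝ) / 2) + βn n := by
  set u := Real.sqrt q with hu
  have hu0 : 0 < u := Real.sqrt_pos.mpr hq
  have hu1 : u ≠ 1 := by
    intro h
    apply hq1
    have := Real.sq_sqrt hq.le
    rw [← hu, h] at this
    simpa using this.symm
  have hq12 : q ^ ((1:ℝ)/2) = u := by
    rw [hu, Real.sqrt_eq_rpow]
  have hα1 : 1 - α 1 = (-(u-1)^2) / (2*u) := by
    rw [hα]
    push_cast
    rw [neg_div, Real.rpow_neg hq.le, hq12]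
    field_simp
    ring
  have hα1ne : 1 - α 1 ≠ 0 := by
    rw [hα1]
    apply div_ne_zero
    · simpa [sub_eq_zero] using hu1
    · positivity
  have hβ' : β = c₃ * (1 - α 1) := by
    rw [hβ, hα1]
    field_simp
  have hβn' : βn n = c₃ * (1 - α n) := by
    rw [hβn, hβ']
    field_simp
  set P := q ^ ((n:ℝ)/2) with hP
  have hP0 : 0 < P := Real.rpow_pos_of_pos hq _
  have hPn : q ^ (-(n:ℝ)/2) = P⁻¹ := by
    rw [neg_div, hP, ← Real.rpow_neg hq.le]
  have e1 : q ^ (s + (n:ℝ)) = q ^ s * P * P := by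
    rw [hP, ← Real.rpow_add hq, ← Real.rpow_add hq]
    ring_nf
  have e2 : q ^ (-(s + (n:ℝ))) = q ^ (-s) * P⁻¹ * P⁻¹ := by
    rw [Real.rpow_neg hq.le, e1, Real.rpow_neg hq.le, mul_inv, mul_inv]
  have e3 : q ^ (s + (n:ℝ)/2) = q ^ s * P := by
    rw [hP, ← Real.rpow_add hq]
  have e4 : q ^ (-(s + (n:ℝ)/2)) = q ^ (-s) * P⁻¹ := by
    rw [Real.rpow_neg hq.le, e3, Real.rpow_neg hq.le, mul_inv]
  rw [hx, hx, hx, hα, hβn', hα, hPn, e1, e2, e3, e4]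
  field_simp
  ring
end

section
/- On the quadratic lattice x(s), the divided-difference operator acts on the generalized factorial basis by 𝔻ₓ wₖ(x(s), η) = γₖ w_{k-1}(x(s), η + 1/2), where γₖ = k for the quadratic lattice x(s) = c₄s² + c₅s + c₆. -/
/-- On the quadratic lattice, `𝔻ₓ wₖ(x(s),η) = k · w_{k-1}(x(s), η+1/2)`. -/
theorem stmt9 (c₄ c₅ c₆ : ℂ) (hc₄ : c₄ ≠ 0)
    (x : ℂ → ℂ) (hx : ∀ s : ℂ, x s = c₄ * s ^ 2 + c₅ * s + c₆)
    (w : ℕ → ℂ → ℂ → ℂ)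
    (hw : ∀ (k : ℕ) (s η : ℂ), w k s η = ∏ j ∈ Finset.range k, (x s - x (η + j)))
    (k : ℕ) (hk : 1 ≤ k) (s η : ℂ) (hs : x (s + 1/2) ≠ x (s - 1/2)) :
    (w k (s + 1/2) η - w k (s - 1/2) η) / (x (s + 1/2) - x (s - 1/2))
      = k * w (k - 1) s (η + 1/2) := by
  obtain ⟨m, rfl⟩ : ∃ m, k = m + 1 := ⟨k - 1, (Nat.succ_pred_eq_of_pos hk).symm⟩
  rw [div_eq_iff (sub_ne_zero.mpr hs), hw, hw, hw, Nat.add_sub_cancel]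
  set SA : ℂ := ∏ j ∈ Finset.range m, (s - η - 1/2 - (j : ℂ)) with hSA
  set SB : ℂ := ∏ j ∈ Finset.range m, (c₄ * (s + η + 1/2 + (j : ℂ)) + c₅) with hSB
  have h1 : ∏ j ∈ Finset.range (m + 1), (x (s + 1/2) - x (η + (j : ℕ)))
      = ((s - η + 1/2) * SA) * (SB * (c₄ * (s + η + 1/2 + (m : ℂ)) + c₅)) := by
    have : ∀ j ∈ Finset.range (m + 1), x (s + 1/2) - x (η + (j : ℕ))
        = (s - η + 1/2 - (j : ℂ)) * (c₄ * (s + η + 1/2 + (j : ℂ)) + c₅) := by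
      intro j _; rw [hx, hx]; ring
    rw [Finset.prod_congr rfl this, Finset.prod_mul_distrib,
      Finset.prod_range_succ' (fun j : ℕ => s - η + 1/2 - (j : ℂ)),
      Finset.prod_range_succ (fun j : ℕ => c₄ * (s + η + 1/2 + (j : ℂ)) + c₅)]
    have hA : ∏ j ∈ Finset.range m, (s - η + 1/2 - ((j : ℕ) + 1 : ℕ)) = SA := by
      refine Finset.prod_congr rfl fun j _ => ?_
      push_cast; ring
    rw [hA]; push_cast; ring
  have h2 : ∏ j ∈ Finset.range (m + 1), (x (s - 1/2) - x (η + (j : ℕ)))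
      = (SA * (s - η - 1/2 - (m : ℂ))) * ((c₄ * (s + η - 1/2) + c₅) * SB) := by
    have : ∀ j ∈ Finset.range (m + 1), x (s - 1/2) - x (η + (j : ℕ))
        = (s - η - 1/2 - (j : ℂ)) * (c₄ * (s + η - 1/2 + (j : ℂ)) + c₅) := by
      intro j _; rw [hx, hx]; ring
    rw [Finset.prod_congr rfl this, Finset.prod_mul_distrib,
      Finset.prod_range_succ (fun j : ℕ => s - η - 1/2 - (j : ℂ)),
      Finset.prod_range_succ' (fun j : ℕ => c₄ * (s + η - 1/2 + (j : ℂ)) + c₅)]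
    have hB : ∏ j ∈ Finset.range m, (c₄ * (s + η - 1/2 + ((j : ℕ) + 1 : ℕ)) + c₅) = SB := by
      refine Finset.prod_congr rfl fun j _ => ?_
      push_cast; ring
    rw [hB]; push_cast; ring
  have h3 : ∏ j ∈ Finset.range m, (x s - x (η + 1/2 + (j : ℕ))) = SA * SB := by
    have : ∀ j ∈ Finset.range m, x s - x (η + 1/2 + (j : ℕ))
        = (s - η - 1/2 - (j : ℂ)) * (c₄ * (s + η + 1/2 + (j : ℂ)) + c₅) := by
      intro j _; rw [hx, hx]; ring
    rw [Finset.prod_congr rfl this, Finset.prod_mul_distrib]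
  have h4 : x (s + 1/2) - x (s - 1/2) = 2 * c₄ * s + c₅ := by
    rw [hx, hx]; ring
  rw [h1, h2, h3, h4]
  push_cast
  ring
end

section
/- On the quadratic lattice x(s) = c₄s² + c₅s + c₆ (c₄ ≠ 0), the averaging operator acts on the factorial basis by 𝕊ₓ wₖ(x(s), η) = αₖ wₖ(x(s), η - 1/2) - (γₖ ∇x(η)/2) w_{k-1}(x(s), η + 1/2), where for the quadratic lattice αₖ = 1, γₖ = k and ∇x(η) = x(η) - x(η-1). -/
/-- On the quadratic lattice,
`𝕊ₓ wₖ(x(s),η) = wₖ(x(s),η-1/2) - (k ∇x(η)/2) w_{k-1}(x(s),η+1/2)`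
(with `αₖ = 1`, `γₖ = k`, `∇x(η) = x(η)-x(η-1)`). -/
theorem stmt10 (c₄ c₅ c₆ : ℂ) (hc₄ : c₄ ≠ 0)
    (x : ℂ → ℂ) (hx : ∀ s : ℂ, x s = c₄ * s ^ 2 + c₅ * s + c₆)
    (w : ℕ → ℂ → ℂ → ℂ)
    (hw : ∀ (k : ℕ) (s η : ℂ), w k s η = ∏ j ∈ Finset.range k, (x s - x (η + j)))
    (k : ℕ) (hk : 1 ≤ k) (s η : ℂ) :
    (w k (s + 1/2) η + w k (s - 1/2) η) / 2
      = w k s (η - 1/2) - (k * (x η - x (η - 1)) / 2) * w (k - 1) s (η + 1/2) := by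
  obtain ⟨m, rfl⟩ : ∃ m, k = m + 1 := ⟨k - 1, (Nat.succ_pred_eq_of_pos hk).symm⟩
  set A : ℕ → ℂ := fun j => s - η - j + 1/2 with hA
  set B : ℕ → ℂ := fun j => s - η - j - 1/2 with hB
  set P : ℕ → ℂ := fun j => c₄ * (s + η + j + 1/2) + c₅ with hP
  set Q : ℕ → ℂ := fun j => c₄ * (s + η + j - 1/2) + c₅ with hQ
  have hAB : ∀ j : ℕ, A (j + 1) = B j := by
    intro j; simp only [hA, hB]; push_cast; ring
  have hQP : ∀ j : ℕ, Q (j + 1) = P j := by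
    intro j; simp only [hQ, hP]; push_cast; ring
  set N : ℂ := ∏ j ∈ Finset.range m, (B j * P j) with hN
  have e1 : w (m + 1) (s + 1/2) η = A 0 * P m * N := by
    rw [hw]
    have : ∀ j ∈ Finset.range (m + 1), x (s + 1/2) - x (η + j) = A j * P j := by
      intro j _; simp only [hx, hA, hP]; ring
    rw [Finset.prod_congr rfl this, Finset.prod_mul_distrib,
        Finset.prod_range_succ' A, Finset.prod_range_succ,
        Finset.prod_congr rfl (fun j _ => hAB j), hN, Finset.prod_mul_distrib]
    ring
  have e2 : w (m + 1) (s - 1/2) η = B m * Q 0 * N := by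
    rw [hw]
    have : ∀ j ∈ Finset.range (m + 1), x (s - 1/2) - x (η + j) = B j * Q j := by
      intro j _; simp only [hx, hB, hQ]; ring
    rw [Finset.prod_congr rfl this, Finset.prod_mul_distrib,
        Finset.prod_range_succ B, Finset.prod_range_succ' Q,
        Finset.prod_congr rfl (fun j _ => hQP j), hN, Finset.prod_mul_distrib]
    ring
  have e3 : w (m + 1) s (η - 1/2) = A 0 * Q 0 * N := by
    rw [hw]
    have : ∀ j ∈ Finset.range (m + 1), x s - x (η - 1/2 + j) = A j * Q j := by
      intro j _; simp only [hx, hA, hQ]; ring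
    rw [Finset.prod_congr rfl this, Finset.prod_mul_distrib,
        Finset.prod_range_succ' A, Finset.prod_range_succ' Q,
        Finset.prod_congr rfl (fun j _ => hAB j),
        Finset.prod_congr rfl (fun j _ => hQP j), hN, Finset.prod_mul_distrib]
    ring
  have e4 : w (m + 1 - 1) s (η + 1/2) = N := by
    rw [Nat.add_sub_cancel, hw, hN]
    refine Finset.prod_congr rfl fun j _ => ?_
    simp only [hx, hB, hP]; ring
  rw [e1, e2, e3, e4, hx η, hx (η - 1)]
  simp only [hA, hB, hP, hQ]
  push_cast
  ring
end

section
/- Suppose a sequence of monic polynomials Pₙ of degree n satisfies the second-order difference equation A(s)Pₙ(x(s+1)) + B(s)Pₙ(x(s)) + C(s)Pₙ(x(s−1)) = λₙPₙ(x(s)) with P₀ = 1 and λ₀ = 0. Then A(s) + B(s) + C(s) = 0 for all s, and there are functions φ(x) and ψ(x), determined by A, C and the lattice x(s), such that Pₙ satisfies the Sturm–Liouville type equation φ(x)𝔻ₓ²Pₙ + ψ(x)𝕊ₓ𝔻ₓPₙ + λₙPₙ = 0; that is, the difference equation can be rewritten using only 𝔻ₓ² and 𝕊ₓ𝔻ₓ.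 -/
lemma stmt18_aux0 (d Aa Cc L p0 u v a c : ℂ) (hd : d ≠ 0)
    (h : Aa * (u * a) - Cc * (v * c) = L * p0) :
    (-d * (Aa * a + Cc * c) / 2) * ((u - v) / d)
      + (Cc * c - Aa * a) * ((u + v) / 2)
      + L * p0 = 0 := by
  field_simp
  linear_combination -2 * h

lemma stmt18_aux (a c d Aa Cc L p1 p0 pm : ℂ)
    (ha : a ≠ 0) (hc : c ≠ 0) (hd : d ≠ 0)
    (h : Aa * p1 + (-Aa - Cc) * p0 + Cc * pm = L * p0) :
    (-d * (Aa * a + Cc * c) / 2) * (((p1 - p0) / a - (p0 - pm) / c) / d)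
      + (Cc * c - Aa * a) * (((p1 - p0) / a + (p0 - pm) / c) / 2)
      + L * p0 = 0 := by
  refine stmt18_aux0 d Aa Cc L p0 ((p1 - p0) / a) ((p0 - pm) / c) a c hd ?_
  rw [div_mul_cancel₀ _ ha, div_mul_cancel₀ _ hc]
  linear_combination h

/-- If a sequence of monic polynomials `Pₙ` of degree `n` satisfies
`A(s)Pₙ(x(s+1)) + B(s)Pₙ(x(s)) + C(s)Pₙ(x(s-1)) = λₙ Pₙ(x(s))` with `P₀ = 1`, `λ₀ = 0`,
then `A + B + C = 0` and the difference equation can be rewritten as a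
Sturm–Liouville type equation `φ 𝔻ₓ²Pₙ + ψ 𝕊ₓ𝔻ₓPₙ + λₙ Pₙ = 0`. -/
theorem stmt18 (x : ℝ → ℂ) (A B C : ℝ → ℂ) (lam : ℕ → ℂ)
    (P : ℕ → Polynomial ℂ)
    (hmonic : ∀ n, (P n).Monic) (hdeg : ∀ n, (P n).natDegree = n)
    (hP0 : P 0 = 1) (hlam0 : lam 0 = 0)
    (hx1 : ∀ s : ℝ, x (s + 1) ≠ x s) (hx2 : ∀ s : ℝ, x s ≠ x (s - 1))
    (hx3 : ∀ s : ℝ, x (s + 1/2) ≠ x (s - 1/2))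
    (heq : ∀ (n : ℕ) (s : ℝ),
      A s * (P n).eval (x (s + 1)) + B s * (P n).eval (x s) + C s * (P n).eval (x (s - 1))
        = lam n * (P n).eval (x s)) :
    (∀ s : ℝ, A s + B s + C s = 0) ∧
    ∃ φ ψ : ℝ → ℂ, ∀ (n : ℕ) (s : ℝ),
      φ s * ((((P n).eval (x (s + 1)) - (P n).eval (x s)) / (x (s + 1) - x s)
              - ((P n).eval (x s) - (P n).eval (x (s - 1))) / (x s - x (s - 1)))
            / (x (s + 1/2) - x (s - 1/2)))
        + ψ s * ((((P n).eval (x (s + 1)) - (P n).eval (x s)) / (x (s + 1) - x s)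
              + ((P n).eval (x s) - (P n).eval (x (s - 1))) / (x s - x (s - 1))) / 2)
        + lam n * (P n).eval (x s) = 0 := by
  have hsum : ∀ s : ℝ, A s + B s + C s = 0 := by
    intro s
    have h := heq 0 s
    simpa [hP0, hlam0] using h
  refine ⟨hsum, ?_⟩
  refine ⟨fun s => -(x (s + 1/2) - x (s - 1/2)) *
      (A s * (x (s + 1) - x s) + C s * (x s - x (s - 1))) / 2,
    fun s => C s * (x s - x (s - 1)) - A s * (x (s + 1) - x s), ?_⟩
  intro n s
  have ha : x (s + 1) - x s ≠ 0 := sub_ne_zero.mpr (hx1 s)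
  have hc : x s - x (s - 1) ≠ 0 := sub_ne_zero.mpr (hx2 s)
  have hd : x (s + 1/2) - x (s - 1/2) ≠ 0 := sub_ne_zero.mpr (hx3 s)
  have hB : B s = -(A s) - C s := by linear_combination hsum s
  have h := heq n s
  rw [hB] at h
  have := stmt18_aux (x (s + 1) - x s) (x s - x (s - 1)) (x (s + 1/2) - x (s - 1/2))
    (A s) (C s) (lam n) ((P n).eval (x (s + 1))) ((P n).eval (x s)) ((P n).eval (x (s - 1)))
    ha hc hd (by linear_combination h)
  linear_combination this
end
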